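/- arXiv:math/9910165 — 5 statements merged into one kernel-verified Lean document; each statement's English description precedes it below -/
import Mathlib

section
/- Let λ be a partition of a positive integer n ≥ 4. Then the number of standard Young tableaux T of shape λ having both i and j as descents is the same for all pairs (i,j) with 1 ≤ i < j ≤ n−1 and j − i > 1; that is, #{T : i ∈ D(T) and j ∈ D(T)} depends only on λ and not on such a pair (i,j). -/
open scoped BigOperators

/-- A standard Young tableau of shape `Y` (a Young diagram with `Y.card = n`):
a bijective filling of the cells of `Y` by the numbers `1, …, n`, strictly increasing
along each row (left to right) and down each column.  Entries outside the
diagram are `0`. -/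
structure SYT (Y : YoungDiagram) where
  entry : ℕ → ℕ → ℕ
  bijOn : Set.BijOn (fun c : ℕ × ℕ => entry c.1 c.2) ↑Y.cells (Set.Icc 1 Y.card)
  row_strict : ∀ ⦃i j1 j2 : ℕ⦄, j1 < j2 → (i, j2) ∈ Y → entry i j1 < entry i j2
  col_strict : ∀ ⦃i1 i2 j : ℕ⦄, i1 < i2 → (i2, j) ∈ Y → entry i1 j < entry i2 j
  zeros : ∀ ⦃i j : ℕ⦄, (i, j) ∉ Y → entry i j = 0

namespace SYT

variable {Y : YoungDiagram}

/-- `i` is a descent of `T` : the entry `i + 1` lies in a strictly lower row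
than the entry `i`. -/
def IsDescent (T : SYT Y) (i : ℕ) : Prop :=
  ∃ c ∈ Y.cells, ∃ c' ∈ Y.cells,
    T.entry c.1 c.2 = i ∧ T.entry c'.1 c'.2 = i + 1 ∧ c.1 < c'.1

open Classical in
/-- The descent set `D(T)` of a standard Young tableau, as a finset.
(Descents necessarily lie in `{1, …, n - 1}` ⊆ `range n`.) -/
noncomputable def descents (T : SYT Y) : Finset ℕ :=
  (Finset.range Y.card).filter fun i => T.IsDescent i

/-- The major index `maj(T) = ∑_{i ∈ D(T)} i`. -/
noncomputable def maj (T : SYT Y) : ℕ :=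
  ∑ i ∈ T.descents, i

/-- The descent function `d_f(T) = ∑_{i ∈ D(T)} f(i)`. -/
noncomputable def dfun (f : ℕ → ℝ) (T : SYT Y) : ℝ :=
  ∑ i ∈ T.descents, f i

end SYT

/-- Expectation of a statistic `g` over uniformly random standard Young tableaux
of shape `Y` : `E_λ[g] = (1/f^λ) ∑_T g(T)`. -/
noncomputable def sytExpect (Y : YoungDiagram) (g : SYT Y → ℝ) : ℝ :=
  (∑ᶠ T : SYT Y, g T) / (Nat.card (SYT Y) : ℝ)

/-- Variance of a statistic `g` : `Var_λ[g] = E_λ[g²] − (E_λ[g])²`. -/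
noncomputable def sytVar (Y : YoungDiagram) (g : SYT Y → ℝ) : ℝ :=
  sytExpect Y (fun T => (g T) ^ 2) - (sytExpect Y g) ^ 2

/-- Probability of an event `P` for a uniformly random standard Young tableau of shape `Y`. -/
noncomputable def sytProb (Y : YoungDiagram) (P : SYT Y → Prop) : ℝ :=
  (Nat.card {T : SYT Y // P T} : ℝ) / (Nat.card (SYT Y) : ℝ)

/-- The constant `c(λ) = [C(n,2) − Σ_i C(λ_i,2) + Σ_j C(λ'_j,2)] / (n(n−1))`.
Rows and columns are 0-indexed; since `Y` has at most `Y.card` nonempty rows and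
columns, the sums over `range Y.card` capture all nonzero terms. -/
noncomputable def cpar (Y : YoungDiagram) : ℝ :=
  ((Y.card.choose 2 : ℝ) - ∑ i ∈ Finset.range Y.card, ((Y.rowLen i).choose 2 : ℝ)
      + ∑ j ∈ Finset.range Y.card, ((Y.colLen j).choose 2 : ℝ))
    / ((Y.card : ℝ) * ((Y.card : ℝ) - 1))

/-- The hook length of the cell `c = (i, j)` (0-indexed):
`h_{ij} = λ_{i+1} + λ'_{j+1} − (i+1) − (j+1) + 1 = rowLen i + colLen j − i − j − 1`. -/
def hookLen (Y : YoungDiagram) (c : ℕ × ℕ) : ℕ :=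
  Y.rowLen c.1 + Y.colLen c.2 - c.1 - c.2 - 1

/-!
Haiman's elementary dual equivalence `d_k` is an involution on standard Young tableaux of a
fixed shape which only moves the entries `k, k+1, k+2` and exchanges the descent status of `k`
and `k+1`: when exactly one of them is a descent it swaps either `k, k+1` or `k+1, k+2`, and
the point is that the swapped pair never lies in a common row or column. Hence the number of
tableaux with descents at `i` and `j` is unchanged when `j` moves right or `i` moves left, as
long as they stay at distance at least two; every such pair reduces to `(1, 3)`.
-/

theorem swap_lt_swap {u a b : ℕ} (hab : a < b) (h : ¬(a = u ∧ b = u + 1)) :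
    Equiv.swap u (u + 1) a < Equiv.swap u (u + 1) b := by
  rw [Equiv.swap_apply_def, Equiv.swap_apply_def]
  split_ifs <;> omega

theorem bijOn_swap_Icc {u n : ℕ} (h₁ : 1 ≤ u) (h₂ : u + 1 ≤ n) :
    Set.BijOn (Equiv.swap u (u + 1)) (Set.Icc 1 n) (Set.Icc 1 n) :=
  Equiv.bijOn _ fun a => by
    simp only [Set.mem_Icc, Equiv.swap_apply_def]
    split_ifs <;> omega

namespace SYT

variable {Y : YoungDiagram}

theorem entry_injective : Function.Injective (entry : SYT Y → ℕ → ℕ → ℕ) := by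
  rintro ⟨⟩ ⟨⟩ rfl
  rfl

theorem entry_mem_Icc (T : SYT Y) {c : ℕ × ℕ} (hc : c ∈ Y) :
    T.entry c.1 c.2 ∈ Set.Icc 1 Y.card :=
  T.bijOn.mapsTo hc

theorem row_mono (T : SYT Y) {i j₁ j₂ : ℕ} (hj : j₁ ≤ j₂) (h : (i, j₂) ∈ Y) :
    T.entry i j₁ ≤ T.entry i j₂ := by
  rcases hj.eq_or_lt with rfl | hj
  exacts [le_rfl, (T.row_strict hj h).le]

theorem col_mono (T : SYT Y) {i₁ i₂ j : ℕ} (hi : i₁ ≤ i₂) (h : (i₂, j) ∈ Y) :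
    T.entry i₁ j ≤ T.entry i₂ j := by
  rcases hi.eq_or_lt with rfl | hi
  exacts [le_rfl, (T.col_strict hi h).le]

theorem entry_lt_entry (T : SYT Y) {c d : ℕ × ℕ} (hcd : c < d) (hd : d ∈ Y) :
    T.entry c.1 c.2 < T.entry d.1 d.2 := by
  rcases Prod.lt_iff.1 hcd with ⟨h₁, h₂⟩ | ⟨h₁, h₂⟩
  · calc T.entry c.1 c.2 < T.entry d.1 c.2 := T.col_strict h₁ (Y.up_left_mem le_rfl h₂ hd)
      _ ≤ T.entry d.1 d.2 := T.row_mono h₂ hd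
  · calc T.entry c.1 c.2 < T.entry c.1 d.2 := T.row_strict h₂ (Y.up_left_mem h₁ le_rfl hd)
      _ ≤ T.entry d.1 d.2 := T.col_mono h₁ hd

/-- The cell holding the entry `v`; a junk value unless `v ∈ Set.Icc 1 Y.card`. -/
noncomputable def cell (T : SYT Y) : ℕ → ℕ × ℕ :=
  Function.invFunOn (fun c : ℕ × ℕ => T.entry c.1 c.2) Y.cells

theorem cell_mem (T : SYT Y) {v : ℕ} (hv : v ∈ Set.Icc 1 Y.card) : T.cell v ∈ Y :=
  T.bijOn.surjOn.mapsTo_invFunOn hv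

theorem entry_cell (T : SYT Y) {v : ℕ} (hv : v ∈ Set.Icc 1 Y.card) :
    T.entry (T.cell v).1 (T.cell v).2 = v :=
  T.bijOn.surjOn.rightInvOn_invFunOn hv

theorem cell_eq (T : SYT Y) {c : ℕ × ℕ} {v : ℕ} (hc : c ∈ Y) (hv : T.entry c.1 c.2 = v) :
    T.cell v = c :=
  hv ▸ T.bijOn.invOn_invFunOn.1 hc

theorem not_cell_le_cell (T : SYT Y) {v w : ℕ} (hv : v ∈ Set.Icc 1 Y.card)
    (hw : w ∈ Set.Icc 1 Y.card) (hvw : v < w) : ¬T.cell w ≤ T.cell v := by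
  intro hle
  rcases hle.eq_or_lt with heq | hlt
  · have := T.entry_cell hv
    rw [← heq, T.entry_cell hw] at this
    omega
  · have := T.entry_lt_entry hlt (T.cell_mem hv)
    rw [T.entry_cell hv, T.entry_cell hw] at this
    omega

theorem entry_mem_Ioo (T : SYT Y) {v w : ℕ} (hv : v ∈ Set.Icc 1 Y.card)
    (hw : w ∈ Set.Icc 1 Y.card) {d : ℕ × ℕ} (hvd : T.cell v < d) (hdw : d < T.cell w) :
    T.entry d.1 d.2 ∈ Set.Ioo v w := by
  have hd : d ∈ Y := Y.up_left_mem hdw.le.1 hdw.le.2 (T.cell_mem hw)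
  constructor
  · simpa only [T.entry_cell hv] using T.entry_lt_entry hvd hd
  · simpa only [T.entry_cell hw] using T.entry_lt_entry hdw (T.cell_mem hw)

theorem col_ne_of_row_lt (T : SYT Y) {v w : ℕ} (hv : v ∈ Set.Icc 1 Y.card)
    (hw : w ∈ Set.Icc 1 Y.card) (hvw : v < w) (hrow : (T.cell w).1 < (T.cell v).1) :
    (T.cell v).2 ≠ (T.cell w).2 :=
  fun hcol => T.not_cell_le_cell hv hw hvw ⟨hrow.le, hcol.ge⟩

theorem not_lt_cell_succ_of_cell_lt (T : SYT Y) {v : ℕ} (hv : v ∈ Set.Icc 1 Y.card)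
    (hv' : v + 1 ∈ Set.Icc 1 Y.card) {d : ℕ × ℕ} (hvd : T.cell v < d) : ¬d < T.cell (v + 1) :=
  fun hdv => by
    obtain ⟨h₁, h₂⟩ := T.entry_mem_Ioo hv hv' hvd hdv
    omega

theorem cell_succ_eq_of_lt_of_lt (T : SYT Y) {v : ℕ} (hv : v ∈ Set.Icc 1 Y.card)
    (hv' : v + 2 ∈ Set.Icc 1 Y.card) {d : ℕ × ℕ} (hvd : T.cell v < d)
    (hdv : d < T.cell (v + 2)) : T.cell (v + 1) = d := by
  obtain ⟨h₁, h₂⟩ := T.entry_mem_Ioo hv hv' hvd hdv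
  exact T.cell_eq (Y.up_left_mem hdv.le.1 hdv.le.2 (T.cell_mem hv')) (by omega)

theorem isDescent_iff (T : SYT Y) {i : ℕ} :
    T.IsDescent i ↔ 1 ≤ i ∧ i + 1 ≤ Y.card ∧ (T.cell i).1 < (T.cell (i + 1)).1 := by
  constructor
  · rintro ⟨c, hc, c', hc', rfl, hc'v, hlt⟩
    have hmem := T.entry_mem_Icc hc
    have hmem' := T.entry_mem_Icc hc'
    rw [hc'v] at hmem'
    rw [T.cell_eq hc rfl, T.cell_eq hc' hc'v]
    exact ⟨hmem.1, hmem'.2, hlt⟩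
  · rintro ⟨h₁, h₂, hlt⟩
    exact ⟨T.cell i, T.cell_mem ⟨h₁, by omega⟩, T.cell (i + 1),
      T.cell_mem ⟨by omega, h₂⟩, T.entry_cell ⟨h₁, by omega⟩,
      T.entry_cell ⟨by omega, h₂⟩, hlt⟩

def CanSwap (T : SYT Y) (u : ℕ) : Prop :=
  1 ≤ u ∧ u + 1 ≤ Y.card ∧
    (T.cell u).1 ≠ (T.cell (u + 1)).1 ∧ (T.cell u).2 ≠ (T.cell (u + 1)).2

open Classical in
noncomputable def swap (T : SYT Y) (u : ℕ) : SYT Y :=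
  if h : T.CanSwap u then
    { entry := fun i j => Equiv.swap u (u + 1) (T.entry i j)
      bijOn := (bijOn_swap_Icc h.1 h.2.1).comp T.bijOn
      row_strict := fun i j₁ j₂ hj hm => by
        refine swap_lt_swap (T.row_strict hj hm) fun ⟨e₁, e₂⟩ => h.2.2.1 ?_
        rw [T.cell_eq (Y.up_left_mem le_rfl hj.le hm) e₁, T.cell_eq hm e₂]
      col_strict := fun i₁ i₂ j hi hm => by
        refine swap_lt_swap (T.col_strict hi hm) fun ⟨e₁, e₂⟩ => h.2.2.2 ?_
        rw [T.cell_eq (Y.up_left_mem hi.le le_rfl hm) e₁, T.cell_eq hm e₂]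
      zeros := fun i j hm => by
        rw [T.zeros hm]
        exact Equiv.swap_apply_of_ne_of_ne (by have := h.1; omega) (by omega) }
  else T

theorem swap_entry {T : SYT Y} {u : ℕ} (h : T.CanSwap u) (i j : ℕ) :
    (T.swap u).entry i j = Equiv.swap u (u + 1) (T.entry i j) := by
  rw [swap, dif_pos h]

theorem cell_swap {T : SYT Y} {u : ℕ} (h : T.CanSwap u) {v : ℕ}
    (hv : v ∈ Set.Icc 1 Y.card) :
    (T.swap u).cell v = T.cell (Equiv.swap u (u + 1) v) := by
  have hv' := (bijOn_swap_Icc h.1 h.2.1).mapsTo hv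
  refine (T.swap u).cell_eq (T.cell_mem hv') ?_
  rw [swap_entry h, T.entry_cell hv', Equiv.swap_apply_self]

theorem cell_swap_left {T : SYT Y} {u : ℕ} (h : T.CanSwap u) :
    (T.swap u).cell u = T.cell (u + 1) := by
  rw [cell_swap h ⟨h.1, Nat.le_of_succ_le h.2.1⟩, Equiv.swap_apply_left]

theorem cell_swap_right {T : SYT Y} {u : ℕ} (h : T.CanSwap u) :
    (T.swap u).cell (u + 1) = T.cell u := by
  rw [cell_swap h ⟨Nat.le_add_left 1 u, h.2.1⟩, Equiv.swap_apply_right]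

theorem cell_swap_of_ne {T : SYT Y} {u v : ℕ} (h : T.CanSwap u)
    (hv : v ∈ Set.Icc 1 Y.card) (hvu : v ≠ u) (hvu' : v ≠ u + 1) :
    (T.swap u).cell v = T.cell v := by
  rw [cell_swap h hv, Equiv.swap_apply_of_ne_of_ne hvu hvu']

theorem canSwap_swap {T : SYT Y} {u : ℕ} (h : T.CanSwap u) : (T.swap u).CanSwap u := by
  obtain ⟨h₁, h₂, hrow, hcol⟩ := id h
  simp only [CanSwap, cell_swap_left h, cell_swap_right h]
  exact ⟨h₁, h₂, hrow.symm, hcol.symm⟩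

theorem swap_swap {T : SYT Y} {u : ℕ} (h : T.CanSwap u) : (T.swap u).swap u = T := by
  apply entry_injective
  funext i j
  rw [swap_entry (canSwap_swap h), swap_entry h, Equiv.swap_apply_self]

section DualEquiv

variable (T : SYT Y) {k : ℕ}

/-- If `k + 1` were below `k` in the same column, `k + 2` would have to sit in the row of
`k + 1`, to its right; the cell above `k + 2` in the row of `k` would then hold `k + 1`. -/
theorem col_ne_col_succ (hk : 1 ≤ k) (hk₂ : k + 2 ≤ Y.card)
    (h₁₃ : (T.cell k).1 < (T.cell (k + 2)).1)
    (h₃₂ : (T.cell (k + 2)).1 ≤ (T.cell (k + 1)).1) : (T.cell k).2 ≠ (T.cell (k + 1)).2 := by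
  intro hcol
  have m₀ : k ∈ Set.Icc 1 Y.card := ⟨hk, by omega⟩
  have m₁ : k + 1 ∈ Set.Icc 1 Y.card := ⟨by omega, by omega⟩
  have m₂ : k + 2 ∈ Set.Icc 1 Y.card := ⟨by omega, hk₂⟩
  have hrow : (T.cell (k + 2)).1 = (T.cell (k + 1)).1 := by
    refine h₃₂.eq_or_lt.resolve_right fun hlt => T.not_lt_cell_succ_of_cell_lt m₀ m₁
      (d := ((T.cell (k + 2)).1, (T.cell k).2))
      (Prod.mk_lt_mk_of_lt_of_le h₁₃ le_rfl) (Prod.mk_lt_mk_of_lt_of_le hlt hcol.le)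
  have hright : (T.cell (k + 1)).2 < (T.cell (k + 2)).2 :=
    lt_of_not_ge fun hle => T.not_cell_le_cell m₁ m₂ (by omega) ⟨hrow.le, hle⟩
  have hmid : (T.cell (k + 1)).1 = (T.cell k).1 := by
    rw [T.cell_succ_eq_of_lt_of_lt m₀ m₂ (d := ((T.cell k).1, (T.cell (k + 2)).2))
      (Prod.mk_lt_mk_of_le_of_lt le_rfl (hcol.trans_lt hright))
      (Prod.mk_lt_mk_of_lt_of_le h₁₃ le_rfl)]
  omega

theorem col_succ_ne_col_succ_succ (hk : 1 ≤ k) (hk₂ : k + 2 ≤ Y.card)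
    (h₂₁ : (T.cell (k + 1)).1 ≤ (T.cell k).1)
    (h₁₃ : (T.cell k).1 < (T.cell (k + 2)).1) :
    (T.cell (k + 1)).2 ≠ (T.cell (k + 2)).2 := by
  intro hcol
  have m₀ : k ∈ Set.Icc 1 Y.card := ⟨hk, by omega⟩
  have m₁ : k + 1 ∈ Set.Icc 1 Y.card := ⟨by omega, by omega⟩
  have m₂ : k + 1 + 1 ∈ Set.Icc 1 Y.card := ⟨by omega, hk₂⟩
  have hrow : (T.cell (k + 1)).1 = (T.cell k).1 := by
    refine h₂₁.eq_or_lt.resolve_right fun hlt => T.not_lt_cell_succ_of_cell_lt m₁ m₂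
      (d := ((T.cell k).1, (T.cell (k + 1)).2))
      (Prod.mk_lt_mk_of_lt_of_le hlt le_rfl) (Prod.mk_lt_mk_of_lt_of_le h₁₃ hcol.le)
  have hleft : (T.cell k).2 < (T.cell (k + 1)).2 :=
    lt_of_not_ge fun hle => T.not_cell_le_cell m₀ m₁ (by omega) ⟨hrow.le, hle⟩
  have hmid : (T.cell (k + 1)).1 = (T.cell (k + 2)).1 := by
    rw [T.cell_succ_eq_of_lt_of_lt m₀ m₂ (d := ((T.cell (k + 2)).1, (T.cell k).2))
      (Prod.mk_lt_mk_of_lt_of_le h₁₃ le_rfl)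
      (Prod.mk_lt_mk_of_le_of_lt le_rfl (hleft.trans_eq hcol))]
  omega

/-- Haiman's elementary dual equivalence `d_k`. -/
noncomputable def dualEquiv (T : SYT Y) (k : ℕ) : SYT Y :=
  if ((T.cell k).1 < (T.cell (k + 1)).1 ↔ (T.cell (k + 1)).1 < (T.cell (k + 2)).1) then T
  else if ((T.cell k).1 < (T.cell (k + 1)).1 ↔ (T.cell k).1 < (T.cell (k + 2)).1) then T.swap k
  else T.swap (k + 1)

theorem dualEquiv_eq_self
    (h : (T.cell k).1 < (T.cell (k + 1)).1 ↔ (T.cell (k + 1)).1 < (T.cell (k + 2)).1) :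
    T.dualEquiv k = T :=
  if_pos h

theorem dualEquiv_eq_swap_left
    (h : ¬((T.cell k).1 < (T.cell (k + 1)).1 ↔ (T.cell (k + 1)).1 < (T.cell (k + 2)).1))
    (h' : (T.cell k).1 < (T.cell (k + 1)).1 ↔ (T.cell k).1 < (T.cell (k + 2)).1) :
    T.dualEquiv k = T.swap k := by
  rw [dualEquiv, if_neg h, if_pos h']

theorem dualEquiv_eq_swap_right
    (h : ¬((T.cell k).1 < (T.cell (k + 1)).1 ↔ (T.cell (k + 1)).1 < (T.cell (k + 2)).1))
    (h' : ¬((T.cell k).1 < (T.cell (k + 1)).1 ↔ (T.cell k).1 < (T.cell (k + 2)).1)) :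
    T.dualEquiv k = T.swap (k + 1) := by
  rw [dualEquiv, if_neg h, if_neg h']

theorem canSwap_left (hk : 1 ≤ k) (hk₂ : k + 2 ≤ Y.card)
    (h : ¬((T.cell k).1 < (T.cell (k + 1)).1 ↔ (T.cell (k + 1)).1 < (T.cell (k + 2)).1))
    (h' : (T.cell k).1 < (T.cell (k + 1)).1 ↔ (T.cell k).1 < (T.cell (k + 2)).1) :
    T.CanSwap k := by
  refine ⟨hk, by omega, by omega, ?_⟩
  by_cases h₁₂ : (T.cell k).1 < (T.cell (k + 1)).1
  · exact T.col_ne_col_succ hk hk₂ (h'.1 h₁₂) (by omega)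
  · exact T.col_ne_of_row_lt ⟨hk, by omega⟩ ⟨by omega, by omega⟩ (by omega) (by omega)

theorem canSwap_right (hk : 1 ≤ k) (hk₂ : k + 2 ≤ Y.card)
    (h' : ¬((T.cell k).1 < (T.cell (k + 1)).1 ↔ (T.cell k).1 < (T.cell (k + 2)).1)) :
    T.CanSwap (k + 1) := by
  show 1 ≤ k + 1 ∧ k + 2 ≤ Y.card ∧ (T.cell (k + 1)).1 ≠ (T.cell (k + 2)).1 ∧
    (T.cell (k + 1)).2 ≠ (T.cell (k + 2)).2
  refine ⟨by omega, hk₂, by omega, ?_⟩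
  by_cases h₁₂ : (T.cell k).1 < (T.cell (k + 1)).1
  · exact T.col_ne_of_row_lt ⟨by omega, by omega⟩ ⟨by omega, hk₂⟩ (by omega) (by omega)
  · exact T.col_succ_ne_col_succ_succ hk hk₂ (by omega) (by omega)

theorem cell_dualEquiv_of_ne (hk : 1 ≤ k) (hk₂ : k + 2 ≤ Y.card) {v : ℕ}
    (hv : v ∈ Set.Icc 1 Y.card) (h₀ : v ≠ k) (h₁ : v ≠ k + 1) (h₂ : v ≠ k + 2) :
    (T.dualEquiv k).cell v = T.cell v := by
  by_cases h : (T.cell k).1 < (T.cell (k + 1)).1 ↔ (T.cell (k + 1)).1 < (T.cell (k + 2)).1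
  · rw [T.dualEquiv_eq_self h]
  by_cases h' : (T.cell k).1 < (T.cell (k + 1)).1 ↔ (T.cell k).1 < (T.cell (k + 2)).1
  · rw [T.dualEquiv_eq_swap_left h h', cell_swap_of_ne (T.canSwap_left hk hk₂ h h') hv h₀ h₁]
  · rw [T.dualEquiv_eq_swap_right h h', cell_swap_of_ne (T.canSwap_right hk hk₂ h') hv h₁ h₂]

theorem row_lt_row_dualEquiv_iff (hk : 1 ≤ k) (hk₂ : k + 2 ≤ Y.card) :
    (((T.dualEquiv k).cell k).1 < ((T.dualEquiv k).cell (k + 1)).1 ↔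
      (T.cell (k + 1)).1 < (T.cell (k + 2)).1) ∧
    (((T.dualEquiv k).cell (k + 1)).1 < ((T.dualEquiv k).cell (k + 2)).1 ↔
      (T.cell k).1 < (T.cell (k + 1)).1) := by
  by_cases h : (T.cell k).1 < (T.cell (k + 1)).1 ↔ (T.cell (k + 1)).1 < (T.cell (k + 2)).1
  · rw [T.dualEquiv_eq_self h]
    exact ⟨h, h.symm⟩
  by_cases h' : (T.cell k).1 < (T.cell (k + 1)).1 ↔ (T.cell k).1 < (T.cell (k + 2)).1
  · have hs := T.canSwap_left hk hk₂ h h'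
    rw [T.dualEquiv_eq_swap_left h h', cell_swap_left hs, cell_swap_right hs,
      cell_swap_of_ne hs ⟨by omega, hk₂⟩ (by omega) (by omega)]
    omega
  · have hs := T.canSwap_right hk hk₂ h'
    rw [T.dualEquiv_eq_swap_right h h', cell_swap_of_ne hs ⟨hk, by omega⟩ (by omega) (by omega),
      cell_swap_left hs, cell_swap_right hs, show k + 1 + 1 = k + 2 from rfl]
    omega

theorem dualEquiv_dualEquiv (hk : 1 ≤ k) (hk₂ : k + 2 ≤ Y.card) :
    (T.dualEquiv k).dualEquiv k = T := by
  by_cases h : (T.cell k).1 < (T.cell (k + 1)).1 ↔ (T.cell (k + 1)).1 < (T.cell (k + 2)).1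
  · rw [T.dualEquiv_eq_self h, T.dualEquiv_eq_self h]
  by_cases h' : (T.cell k).1 < (T.cell (k + 1)).1 ↔ (T.cell k).1 < (T.cell (k + 2)).1
  · have hs := T.canSwap_left hk hk₂ h h'
    rw [T.dualEquiv_eq_swap_left h h', (T.swap k).dualEquiv_eq_swap_left, swap_swap hs] <;>
      rw [cell_swap_left hs, cell_swap_right hs,
        cell_swap_of_ne hs ⟨by omega, hk₂⟩ (by omega) (by omega)] <;> omega
  · have hs := T.canSwap_right hk hk₂ h'
    rw [T.dualEquiv_eq_swap_right h h', (T.swap (k + 1)).dualEquiv_eq_swap_right, swap_swap hs] <;>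
      rw [cell_swap_of_ne hs ⟨hk, by omega⟩ (by omega) (by omega), cell_swap_left hs,
        cell_swap_right hs, show k + 1 + 1 = k + 2 from rfl] <;> omega

theorem isDescent_dualEquiv_of_far (hk : 1 ≤ k) (hk₂ : k + 2 ≤ Y.card) {m : ℕ}
    (hm : m + 2 ≤ k ∨ k + 3 ≤ m) : (T.dualEquiv k).IsDescent m ↔ T.IsDescent m := by
  simp only [isDescent_iff]
  refine and_congr_right fun h₁ => and_congr_right fun h₂ => ?_
  rw [T.cell_dualEquiv_of_ne hk hk₂ ⟨h₁, by omega⟩ (by omega) (by omega) (by omega),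
    T.cell_dualEquiv_of_ne hk hk₂ ⟨by omega, h₂⟩ (by omega) (by omega) (by omega)]

theorem isDescent_dualEquiv_left (hk : 1 ≤ k) (hk₂ : k + 2 ≤ Y.card) :
    (T.dualEquiv k).IsDescent k ↔ T.IsDescent (k + 1) := by
  simp only [isDescent_iff, (T.row_lt_row_dualEquiv_iff hk hk₂).1,
    show k + 1 + 1 = k + 2 from rfl]
  omega

theorem isDescent_dualEquiv_right (hk : 1 ≤ k) (hk₂ : k + 2 ≤ Y.card) :
    (T.dualEquiv k).IsDescent (k + 1) ↔ T.IsDescent k := by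
  simp only [isDescent_iff, (T.row_lt_row_dualEquiv_iff hk hk₂).2,
    show k + 1 + 1 = k + 2 from rfl]
  omega

end DualEquiv

theorem card_isDescent_and_isDescent_succ {k m : ℕ} (hk : 1 ≤ k) (hk₂ : k + 2 ≤ Y.card)
    (hm : m + 2 ≤ k ∨ k + 3 ≤ m) :
    Nat.card {T : SYT Y // T.IsDescent m ∧ T.IsDescent k} =
      Nat.card {T : SYT Y // T.IsDescent m ∧ T.IsDescent (k + 1)} :=
  Nat.card_congr <| Equiv.subtypeEquiv
    (Function.Involutive.toPerm _ fun T => T.dualEquiv_dualEquiv hk hk₂) fun T =>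
      (and_congr (T.isDescent_dualEquiv_of_far hk hk₂ hm)
        (T.isDescent_dualEquiv_right hk hk₂)).symm

theorem card_isDescent_one_and (j : ℕ) (hj : 3 ≤ j) (hjn : j + 1 ≤ Y.card) :
    Nat.card {T : SYT Y // T.IsDescent 1 ∧ T.IsDescent j} =
      Nat.card {T : SYT Y // T.IsDescent 1 ∧ T.IsDescent 3} := by
  induction j, hj using Nat.le_induction with
  | base => rfl
  | succ j hj ih =>
    rw [← card_isDescent_and_isDescent_succ (by omega) hjn (.inl (by omega)), ih (by omega)]

theorem card_isDescent_and (i j : ℕ) (hi : 1 ≤ i) (hij : i + 2 ≤ j) (hjn : j + 1 ≤ Y.card) :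
    Nat.card {T : SYT Y // T.IsDescent i ∧ T.IsDescent j} =
      Nat.card {T : SYT Y // T.IsDescent 1 ∧ T.IsDescent 3} := by
  induction i, hi using Nat.le_induction with
  | base => exact card_isDescent_one_and j (by omega) hjn
  | succ i hi ih =>
    have hcomm (a b : ℕ) : Nat.card {T : SYT Y // T.IsDescent a ∧ T.IsDescent b} =
        Nat.card {T : SYT Y // T.IsDescent b ∧ T.IsDescent a} :=
      Nat.card_congr (Equiv.subtypeEquivRight fun _ => and_comm)
    rw [hcomm, ← card_isDescent_and_isDescent_succ hi (by omega) (.inr (by omega)), hcomm,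
      ih (by omega)]

end SYT

theorem count_separated_descents_indep_general (n : ℕ) (Y : YoungDiagram)
    (hY : Y.card = n) (i₁ j₁ i₂ j₂ : ℕ)
    (hi₁ : 1 ≤ i₁) (hj₁ : j₁ ≤ n - 1) (hsep₁ : 1 < j₁ - i₁)
    (hi₂ : 1 ≤ i₂) (hj₂ : j₂ ≤ n - 1) (hsep₂ : 1 < j₂ - i₂) :
    Nat.card {T : SYT Y // T.IsDescent i₁ ∧ T.IsDescent j₁} =
      Nat.card {T : SYT Y // T.IsDescent i₂ ∧ T.IsDescent j₂} := by
  subst hY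
  rw [SYT.card_isDescent_and i₁ j₁ hi₁ (by omega) (by omega),
    SYT.card_isDescent_and i₂ j₂ hi₂ (by omega) (by omega)]

/-- For a partition `λ` of `n ≥ 4`, the number of standard Young
tableaux of shape `λ` having both `i` and `j` as descents is the same for all pairs
`(i, j)` with `1 ≤ i < j ≤ n − 1` and `j − i > 1`. -/
theorem count_separated_descents_indep (n : ℕ) (hn : 4 ≤ n) (Y : YoungDiagram)
    (hY : Y.card = n) (i₁ j₁ i₂ j₂ : ℕ)
    (hi₁ : 1 ≤ i₁) (hij₁ : i₁ < j₁) (hj₁ : j₁ ≤ n - 1) (hsep₁ : 1 < j₁ - i₁)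
    (hi₂ : 1 ≤ i₂) (hij₂ : i₂ < j₂) (hj₂ : j₂ ≤ n - 1) (hsep₂ : 1 < j₂ - i₂) :
    Nat.card {T : SYT Y // T.IsDescent i₁ ∧ T.IsDescent j₁} =
      Nat.card {T : SYT Y // T.IsDescent i₂ ∧ T.IsDescent j₂} :=
  count_separated_descents_indep_general n Y hY i₁ j₁ i₂ j₂ hi₁ hj₁ hsep₁ hi₂ hj₂ hsep₂
end

section
/- Let λ be a partition of a positive integer n ≥ 3 and let i satisfy 1 ≤ i ≤ n−2. Then the number of standard Young tableaux T of shape λ with i ∈ D(T) and i+1 ∉ D(T) equals the number of standard Young tableaux T of shape λ with i ∉ D(T) and i+1 ∈ D(T). -/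
open scoped BigOperators

/-!
Exactly one of `i`, `i + 1` is a descent of `T` iff `i + 1` comes first or last among
`i, i + 1, i + 2` in the row reading word of `T` (bottom row first). Exchange `i + 1` with
whichever of `i`, `i + 2` is not in the middle: the two lie in different rows and columns, so the
result is again standard; the descent statuses of `i` and `i + 1` are exchanged; and the middle
value stays in the middle, so the same rule undoes the exchange. This elementary dual equivalence
is the required bijection.
-/

theorem Equiv.swap_add_one_lt_swap_add_one {a x y : ℕ} (h : x < y) (hxy : ¬(x = a ∧ y = a + 1)) :
    Equiv.swap a (a + 1) x < Equiv.swap a (a + 1) y := by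
  simp only [Equiv.swap_apply_def]
  split_ifs <;> omega

namespace SYT

variable {Y : YoungDiagram} {T : SYT Y} {a v w : ℕ}

theorem ext {T T' : SYT Y} (h : T.entry = T'.entry) : T = T' := by
  cases T; cases T'; simp_all

theorem entry_lt_entry_s8 {r r' j j' : ℕ} (hr : r ≤ r') (hj : j ≤ j') (hmem : (r', j') ∈ Y)
    (hne : (r, j) ≠ (r', j')) : T.entry r j < T.entry r' j' := by
  rcases hj.lt_or_eq with hj | rfl
  · refine (T.row_strict hj (Y.up_left_mem hr le_rfl hmem)).trans_le ?_
    rcases hr.lt_or_eq with hr | rfl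
    · exact (T.col_strict hr hmem).le
    · exact le_rfl
  · rcases hr.lt_or_eq with hr | rfl
    · exact T.col_strict hr hmem
    · exact absurd rfl hne

/-- The cell holding the value `v`, meaningful for `v ∈ [1, Y.card]` only. -/
noncomputable def pos (T : SYT Y) (v : ℕ) : ℕ × ℕ :=
  Function.invFunOn (fun c : ℕ × ℕ => T.entry c.1 c.2) Y.cells v

theorem pos_mem (hv : v ∈ Set.Icc 1 Y.card) : T.pos v ∈ Y :=
  (Y.mem_cells _).1 (Function.invFunOn_mem (T.bijOn.surjOn hv))

theorem entry_pos (hv : v ∈ Set.Icc 1 Y.card) : T.entry (T.pos v).1 (T.pos v).2 = v :=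
  Function.invFunOn_eq (T.bijOn.surjOn hv)

theorem pos_entry {c : ℕ × ℕ} (hc : c ∈ Y) : T.pos (T.entry c.1 c.2) = c :=
  T.bijOn.injOn.leftInvOn_invFunOn ((Y.mem_cells c).2 hc)

theorem isDescent_iff_s8 (hv : 1 ≤ v) (hn : v + 1 ≤ Y.card) :
    T.IsDescent v ↔ (T.pos v).1 < (T.pos (v + 1)).1 := by
  constructor
  · rintro ⟨c, hc, c', hc', rfl, e, hlt⟩
    rwa [← e, pos_entry ((Y.mem_cells c).1 hc), pos_entry ((Y.mem_cells c').1 hc')]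
  · intro h
    exact ⟨_, (Y.mem_cells _).2 (pos_mem ⟨hv, by omega⟩), _,
      (Y.mem_cells _).2 (pos_mem ⟨by omega, hn⟩), entry_pos ⟨hv, by omega⟩,
      entry_pos ⟨by omega, hn⟩, h⟩

theorem lt_of_pos_le_pos (hv : v ∈ Set.Icc 1 Y.card) (hw : w ∈ Set.Icc 1 Y.card)
    (hr : (T.pos v).1 ≤ (T.pos w).1) (hc : (T.pos v).2 ≤ (T.pos w).2) (hne : v ≠ w) : v < w := by
  have hne' : T.pos v ≠ T.pos w := fun h => hne (by rw [← entry_pos hv, h, entry_pos hw])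
  have := entry_lt_entry_s8 (T := T) hr hc (pos_mem hw) hne'
  rwa [entry_pos hv, entry_pos hw] at this

theorem row_lt_iff_not_col_lt (hv : 1 ≤ v) (hn : v + 1 ≤ Y.card) :
    (T.pos v).1 < (T.pos (v + 1)).1 ↔ ¬(T.pos v).2 < (T.pos (v + 1)).2 := by
  have h0 : v ∈ Set.Icc 1 Y.card := ⟨hv, by omega⟩
  have h1 : v + 1 ∈ Set.Icc 1 Y.card := ⟨by omega, hn⟩
  constructor
  · intro hr hc
    have m1 : ((T.pos (v + 1)).1, (T.pos (v + 1)).2) ∈ Y := pos_mem h1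
    have := T.row_strict hc (Y.up_left_mem hr.le le_rfl m1)
    have := T.col_strict hr m1
    have := entry_pos (T := T) h0
    have := entry_pos (T := T) h1
    omega
  · intro hc
    by_contra hr
    have := lt_of_pos_le_pos (T := T) h1 h0 (by omega) (by omega) (by omega)
    omega

theorem not_row_lt_and_col_lt_add_two (hv : 1 ≤ v) (hn : v + 2 ≤ Y.card) :
    ¬((T.pos v).1 < (T.pos (v + 2)).1 ∧ (T.pos v).2 < (T.pos (v + 2)).2) := by
  rintro ⟨hr, hc⟩
  have h0 : v ∈ Set.Icc 1 Y.card := ⟨hv, by omega⟩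
  have h2 : v + 2 ∈ Set.Icc 1 Y.card := ⟨by omega, hn⟩
  have m2 : ((T.pos (v + 2)).1, (T.pos (v + 2)).2) ∈ Y := pos_mem h2
  have hNE : ((T.pos v).1, (T.pos (v + 2)).2) ∈ Y := Y.up_left_mem hr.le le_rfl m2
  have hSW : ((T.pos (v + 2)).1, (T.pos v).2) ∈ Y := Y.up_left_mem le_rfl hc.le m2
  have := T.row_strict hc hNE
  have := T.col_strict hr m2
  have := T.col_strict hr hSW
  have := T.row_strict hc m2
  have := entry_pos (T := T) h0
  have := entry_pos (T := T) h2
  -- both corners hold a value strictly between `v` and `v + 2`, i.e. both hold `v + 1`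
  have hcorners := (pos_entry (T := T) hNE).symm.trans
    ((congrArg T.pos (by omega : T.entry (T.pos v).1 (T.pos (v + 2)).2 =
      T.entry (T.pos (v + 2)).1 (T.pos v).2)).trans (pos_entry hSW))
  simp only [Prod.mk.injEq] at hcorners
  omega

def Swappable (T : SYT Y) (a : ℕ) : Prop :=
  1 ≤ a ∧ a + 1 ≤ Y.card ∧ (T.pos a).1 ≠ (T.pos (a + 1)).1 ∧ (T.pos a).2 ≠ (T.pos (a + 1)).2

theorem Swappable.bijOn_swap (h : T.Swappable a) :
    Set.BijOn (Equiv.swap a (a + 1)) (Set.Icc 1 Y.card) (Set.Icc 1 Y.card) :=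
  Equiv.bijOn_swap ⟨h.1, by have := h.2.1; omega⟩ ⟨by omega, h.2.1⟩

open Classical in
noncomputable def swapValues (T : SYT Y) (a : ℕ) : SYT Y :=
  if h : T.Swappable a then
    { entry := fun i j => Equiv.swap a (a + 1) (T.entry i j)
      bijOn := h.bijOn_swap.comp T.bijOn
      row_strict := fun i j1 j2 hj hm =>
        Equiv.swap_add_one_lt_swap_add_one (T.row_strict hj hm) fun ⟨e1, e2⟩ => h.2.2.1 <| by
          rw [← e2, ← e1, pos_entry (Y.up_left_mem le_rfl hj.le hm), pos_entry hm]
      col_strict := fun i1 i2 j hi hm =>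
        Equiv.swap_add_one_lt_swap_add_one (T.col_strict hi hm) fun ⟨e1, e2⟩ => h.2.2.2 <| by
          rw [← e2, ← e1, pos_entry (Y.up_left_mem hi.le le_rfl hm), pos_entry hm]
      zeros := fun i j hm => by
        have := h.1
        rw [T.zeros hm, Equiv.swap_apply_of_ne_of_ne] <;> omega }
  else T

theorem swapValues_entry (h : T.Swappable a) (i j : ℕ) :
    (T.swapValues a).entry i j = Equiv.swap a (a + 1) (T.entry i j) := by
  rw [swapValues, dif_pos h]

theorem pos_swapValues (h : T.Swappable a) (hw : w ∈ Set.Icc 1 Y.card) :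
    (T.swapValues a).pos w = T.pos (Equiv.swap a (a + 1) w) := by
  have hw' := h.bijOn_swap.mapsTo hw
  conv_lhs => rw [← Equiv.swap_apply_self a (a + 1) w, ← entry_pos hw',
    ← swapValues_entry h, pos_entry (pos_mem hw')]

theorem swappable_swapValues (h : T.Swappable a) : (T.swapValues a).Swappable a := by
  obtain ⟨ha, hn, hr, hc⟩ := id h
  rw [Swappable, pos_swapValues h ⟨ha, by omega⟩, pos_swapValues h ⟨by omega, hn⟩,
    Equiv.swap_apply_left, Equiv.swap_apply_right]
  exact ⟨ha, hn, hr.symm, hc.symm⟩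

theorem swapValues_swapValues (h : T.Swappable a) : (T.swapValues a).swapValues a = T := by
  refine ext (funext₂ fun i j => ?_)
  rw [swapValues_entry (swappable_swapValues h), swapValues_entry h, Equiv.swap_apply_self]

open Classical in
/-- When exactly one of `v`, `v + 1` is a descent, the condition says that `v + 2` lies between
`v` and `v + 1` in the row reading word. -/
noncomputable def flip (T : SYT Y) (v : ℕ) : SYT Y :=
  if ((T.pos v).1 < (T.pos (v + 1)).1 ↔ (T.pos v).1 < (T.pos (v + 2)).1) then T.swapValues v
  else T.swapValues (v + 1)

theorem isDescent_add_one_iff (hn : v + 2 ≤ Y.card) :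
    T.IsDescent (v + 1) ↔ (T.pos (v + 1)).1 < (T.pos (v + 2)).1 :=
  isDescent_iff_s8 (by omega) hn

theorem isDescent_flip_and_flip_flip (hv : 1 ≤ v) (hn : v + 2 ≤ Y.card)
    (hT : T.IsDescent v ↔ ¬T.IsDescent (v + 1)) :
    ((T.flip v).IsDescent v ↔ T.IsDescent (v + 1)) ∧
      ((T.flip v).IsDescent (v + 1) ↔ T.IsDescent v) ∧ (T.flip v).flip v = T := by
  have h0 : v ∈ Set.Icc 1 Y.card := ⟨hv, by omega⟩
  have h1 : v + 1 ∈ Set.Icc 1 Y.card := ⟨by omega, by omega⟩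
  have h2 : v + 2 ∈ Set.Icc 1 Y.card := ⟨by omega, hn⟩
  simp only [isDescent_iff_s8 hv (by omega : v + 1 ≤ Y.card), isDescent_add_one_iff hn] at hT ⊢
  have F1 := row_lt_iff_not_col_lt (T := T) hv (by omega)
  have F2 : (T.pos (v + 1)).1 < (T.pos (v + 2)).1 ↔ ¬(T.pos (v + 1)).2 < (T.pos (v + 2)).2 :=
    row_lt_iff_not_col_lt (by omega) hn
  have F3 := not_row_lt_and_col_lt_add_two (T := T) hv hn
  unfold flip
  by_cases hC : (T.pos v).1 < (T.pos (v + 1)).1 ↔ (T.pos v).1 < (T.pos (v + 2)).1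
  · have hs : T.Swappable v := ⟨hv, by omega, by omega, by omega⟩
    simp only [if_pos hC, pos_swapValues hs h0, pos_swapValues hs h1, pos_swapValues hs h2,
      Equiv.swap_apply_left, Equiv.swap_apply_right,
      Equiv.swap_apply_of_ne_of_ne (by omega : v + 2 ≠ v) (by omega : v + 2 ≠ v + 1)]
    rw [if_pos (by omega), swapValues_swapValues hs]
    exact ⟨by omega, by omega, rfl⟩
  · have e : v + 1 + 1 = v + 2 := rfl
    have hs : T.Swappable (v + 1) := by
      refine ⟨by omega, hn, ?_, ?_⟩ <;> rw [e] <;> omega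
    simp only [if_neg hC, pos_swapValues hs h0, pos_swapValues hs h1, pos_swapValues hs h2, e,
      Equiv.swap_apply_left, Equiv.swap_apply_right,
      Equiv.swap_apply_of_ne_of_ne (by omega : v ≠ v + 1) (by omega : v ≠ v + 2)]
    rw [if_neg (by omega), swapValues_swapValues hs]
    exact ⟨by omega, by omega, rfl⟩

end SYT

theorem count_descent_nondescent_symm_general (n : ℕ) (Y : YoungDiagram)
    (hY : Y.card = n) (i : ℕ) (hi : 1 ≤ i) (hi' : i ≤ n - 2) :
    Nat.card {T : SYT Y // T.IsDescent i ∧ ¬T.IsDescent (i + 1)} =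
      Nat.card {T : SYT Y // ¬T.IsDescent i ∧ T.IsDescent (i + 1)} := by
  have hn : i + 2 ≤ Y.card := by omega
  have hA (T : {T : SYT Y // T.IsDescent i ∧ ¬T.IsDescent (i + 1)}) :=
    SYT.isDescent_flip_and_flip_flip hi hn (iff_of_true T.2.1 T.2.2)
  have hB (T : {T : SYT Y // ¬T.IsDescent i ∧ T.IsDescent (i + 1)}) :=
    SYT.isDescent_flip_and_flip_flip hi hn (iff_of_false T.2.1 (not_not_intro T.2.2))
  exact Nat.card_congr
    { toFun := fun T => ⟨T.1.flip i, mt (hA T).1.1 T.2.2, (hA T).2.1.2 T.2.1⟩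
      invFun := fun T => ⟨T.1.flip i, (hB T).1.2 T.2.2, mt (hB T).2.1.1 T.2.1⟩
      left_inv := fun T => Subtype.ext (hA T).2.2
      right_inv := fun T => Subtype.ext (hB T).2.2 }

/-- For a partition `λ` of `n ≥ 3` and `1 ≤ i ≤ n − 2`, the number of
standard Young tableaux of shape `λ` with `i ∈ D(T)` and `i+1 ∉ D(T)` equals the number
with `i ∉ D(T)` and `i+1 ∈ D(T)`. -/
theorem count_descent_nondescent_symm (n : ℕ) (hn : 3 ≤ n) (Y : YoungDiagram)
    (hY : Y.card = n) (i : ℕ) (hi : 1 ≤ i) (hi' : i ≤ n - 2) :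
    Nat.card {T : SYT Y // T.IsDescent i ∧ ¬T.IsDescent (i + 1)} =
      Nat.card {T : SYT Y // ¬T.IsDescent i ∧ T.IsDescent (i + 1)} :=
  count_descent_nondescent_symm_general n Y hY i hi hi'
end

section
/- Let λ be a partition of a positive integer n ≥ 4 and let f : ℕ → ℝ. Set P₂ = Pr[i ∈ D(T)] (which is independent of i for 1 ≤ i ≤ n−1), P₃ = Pr[i ∈ D(T) and i+1 ∈ D(T)] (independent of i for 1 ≤ i ≤ n−2), and P₂₂ = Pr[i ∈ D(T) and j ∈ D(T)] (independent of the pair (i,j) with 1 ≤ i < j ≤ n−1, j − i > 1); also set Σ₁ = Σ_{i=1}^{n−1} f(i), Σ₂ = Σ_{i=1}^{n−1} f(i)², and Σ₃ = 2·Σ_{i=1}^{n−2} f(i)f(i+1). Then Var_λ[d_f] = (P₂ − P₂₂)·Σ₂ + (P₃ − P₂₂)·Σ₃ + (P₂₂ − P₂²)·Σ₁². -/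
open scoped BigOperators

/-!
Write `d_f(T) = ∑_{i=1}^{n-1} f(i) 𝟙[i ∈ D(T)]`. Expanding the square, the variance is the
quadratic form `∑_{i,j} f(i) f(j) (Pr[i, j ∈ D(T)] − Pr[i ∈ D(T)] Pr[j ∈ D(T)])`, whose kernel
takes only three values: `P₂ − P₂²` on the diagonal, `P₃ − P₂²` next to it, and `P₂₂ − P₂²`
elsewhere, and a quadratic form with a banded kernel taking values `a`, `b`, `d` equals
`(a − d) Σ₂ + (b − d) Σ₃ + d Σ₁²`.
-/

open Finset

namespace SYT

variable {Y : YoungDiagram}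

theorem ext_entry {T₁ T₂ : SYT Y} (h : T₁.entry = T₂.entry) : T₁ = T₂ := by
  cases T₁; cases T₂; cases h; rfl

instance : Finite (SYT Y) := by
  refine Finite.of_injective
    (fun (T : SYT Y) (c : ↑(Y.cells : Set (ℕ × ℕ))) =>
      (⟨T.entry c.1.1 c.1.2, T.bijOn.mapsTo c.2⟩ : Set.Icc 1 Y.card)) fun T₁ T₂ h => ?_
  refine ext_entry (funext₂ fun i j => ?_)
  by_cases hc : (i, j) ∈ Y
  · exact congrArg Subtype.val (congrFun h ⟨(i, j), Finset.mem_coe.mpr ((Y.mem_cells _).mpr hc)⟩)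
  · rw [T₁.zeros hc, T₂.zeros hc]

theorem IsDescent.mem_Icc {T : SYT Y} {i : ℕ} (h : T.IsDescent i) :
    i ∈ Icc 1 (Y.card - 1) := by
  obtain ⟨c, hc, c', hc', rfl, hc'_eq, -⟩ := h
  have hi := T.bijOn.mapsTo (Finset.mem_coe.mpr hc)
  have hi' := T.bijOn.mapsTo (Finset.mem_coe.mpr hc')
  simp only [Set.mem_Icc] at hi hi'
  rw [Finset.mem_Icc]
  omega

open Classical in
theorem descents_eq_filter_Icc (T : SYT Y) :
    T.descents = (Icc 1 (Y.card - 1)).filter T.IsDescent := by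
  ext i
  simp only [descents, mem_filter, mem_range, and_congr_left_iff]
  intro h
  have hi := mem_Icc.mp h.mem_Icc
  simp only [mem_Icc]
  omega

open Classical in
theorem dfun_eq_sum_Icc (f : ℕ → ℝ) (T : SYT Y) :
    T.dfun f = ∑ i ∈ Icc 1 (Y.card - 1), if T.IsDescent i then f i else 0 := by
  rw [dfun, descents_eq_filter_Icc, sum_filter]

end SYT

section Uniform

variable {Y : YoungDiagram}

theorem sytExpect_sum {ι : Type*} (s : Finset ι) (g : ι → SYT Y → ℝ) :
    sytExpect Y (fun T => ∑ i ∈ s, g i T) = ∑ i ∈ s, sytExpect Y (g i) := by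
  have := Fintype.ofFinite (SYT Y)
  simp only [sytExpect, finsum_eq_sum_of_fintype, ← sum_div]
  rw [sum_comm]

theorem sytExpect_ite_zero (P : SYT Y → Prop) [DecidablePred P] (c : ℝ) :
    sytExpect Y (fun T => if P T then c else 0) = c * sytProb Y P := by
  have := Fintype.ofFinite (SYT Y)
  rw [sytExpect, sytProb, finsum_eq_sum_of_fintype, ← sum_filter, sum_const, nsmul_eq_mul,
    Nat.card_eq_fintype_card, Nat.card_eq_fintype_card, Fintype.card_subtype, mul_comm,
    mul_div_assoc]

theorem sytVar_sum_ite {ι : Type*} (s : Finset ι) (f : ι → ℝ) (P : ι → SYT Y → Prop)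
    [∀ i, DecidablePred (P i)] :
    sytVar Y (fun T => ∑ i ∈ s, if P i T then f i else 0) =
      ∑ i ∈ s, ∑ j ∈ s, f i * f j *
        (sytProb Y (fun T => P i T ∧ P j T) - sytProb Y (P i) * sytProb Y (P j)) := by
  have hsq : ∀ T, (∑ i ∈ s, if P i T then f i else 0) ^ 2 =
      ∑ i ∈ s, ∑ j ∈ s, if P i T ∧ P j T then f i * f j else 0 := fun T => by
    rw [sq, sum_mul_sum]
    refine sum_congr rfl fun i _ => sum_congr rfl fun j _ => ?_
    by_cases hi : P i T <;> by_cases hj : P j T <;> simp [hi, hj]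
  simp only [sytVar, hsq, sytExpect_sum, sytExpect_ite_zero]
  rw [sq, sum_mul_sum, ← sum_sub_distrib]
  refine sum_congr rfl fun i _ => ?_
  rw [← sum_sub_distrib]
  refine sum_congr rfl fun j _ => ?_
  ring

theorem sytProb_and_comm (P Q : SYT Y → Prop) :
    sytProb Y (fun T => P T ∧ Q T) = sytProb Y (fun T => Q T ∧ P T) := by
  simp only [and_comm]

end Uniform

theorem sum_Icc_sum_Icc_ite_eq_add_one {M : Type*} [AddCommMonoid M] (m : ℕ) (g : ℕ → ℕ → M) :
    ∑ i ∈ Icc 1 m, ∑ j ∈ Icc 1 m, (if j = i + 1 then g i j else 0) =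
      ∑ i ∈ Icc 1 (m - 1), g i (i + 1) := by
  simp only [sum_ite_eq']
  rw [← sum_filter]
  congr 1
  ext i
  simp only [mem_filter, mem_Icc]
  omega

theorem sum_Icc_sum_Icc_mul_of_banded (m : ℕ) (f : ℕ → ℝ) (c : ℕ → ℕ → ℝ) (a b d : ℝ)
    (hdiag : ∀ i ∈ Icc 1 m, c i i = a)
    (hnext : ∀ i ∈ Icc 1 m, ∀ j ∈ Icc 1 m, (j = i + 1 ∨ i = j + 1) → c i j = b)
    (hfar : ∀ i ∈ Icc 1 m, ∀ j ∈ Icc 1 m, (i + 1 < j ∨ j + 1 < i) → c i j = d) :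
    ∑ i ∈ Icc 1 m, ∑ j ∈ Icc 1 m, f i * f j * c i j =
      (a - d) * ∑ i ∈ Icc 1 m, f i ^ 2
        + (b - d) * (2 * ∑ i ∈ Icc 1 (m - 1), f i * f (i + 1))
        + d * (∑ i ∈ Icc 1 m, f i) ^ 2 := by
  have hc_split : ∀ i ∈ Icc 1 m, ∀ j ∈ Icc 1 m, f i * f j * c i j =
      d * (f i * f j) + (if i = j then (a - d) * f i ^ 2 else 0)
        + (if j = i + 1 then (b - d) * (f i * f j) else 0)
        + (if i = j + 1 then (b - d) * (f j * f i) else 0) := by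
    intro i hi j hj
    have hij : i = j ∨ (j = i + 1 ∨ i = j + 1) ∨ (i + 1 < j ∨ j + 1 < i) := by omega
    rcases hij with rfl | hnear | hfar_ij
    · rw [hdiag i hi]
      split_ifs <;> first | omega | ring
    · rw [hnext i hi j hj hnear]
      split_ifs <;> first | omega | ring
    · rw [hfar i hi j hj hfar_ij]
      split_ifs <;> first | omega | ring
  have hsq : ∑ i ∈ Icc 1 m, ∑ j ∈ Icc 1 m, d * (f i * f j) = d * (∑ i ∈ Icc 1 m, f i) ^ 2 := by
    rw [sq, sum_mul_sum]
    simp only [mul_sum]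
  have hdiag_sum : ∑ i ∈ Icc 1 m, ∑ j ∈ Icc 1 m, (if i = j then (a - d) * f i ^ 2 else 0) =
      (a - d) * ∑ i ∈ Icc 1 m, f i ^ 2 := by
    rw [mul_sum]
    exact sum_congr rfl fun i hi => by rw [sum_ite_eq, if_pos hi]
  have hleft : ∑ i ∈ Icc 1 m, ∑ j ∈ Icc 1 m, (if i = j + 1 then (b - d) * (f j * f i) else 0) =
      ∑ i ∈ Icc 1 (m - 1), (b - d) * (f i * f (i + 1)) := by
    rw [sum_comm]
    exact sum_Icc_sum_Icc_ite_eq_add_one m fun j i => (b - d) * (f j * f i)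
  rw [sum_congr rfl fun i hi => sum_congr rfl fun j hj => hc_split i hi j hj]
  simp only [sum_add_distrib]
  rw [hsq, hdiag_sum, hleft, sum_Icc_sum_Icc_ite_eq_add_one, ← mul_sum]
  ring

theorem variance_descent_function_general (n : ℕ) (Y : YoungDiagram) (hY : Y.card = n)
    (f : ℕ → ℝ) (P₂ P₃ P₂₂ : ℝ)
    (hP2 : ∀ i : ℕ, 1 ≤ i → i ≤ n - 1 → sytProb Y (fun T => T.IsDescent i) = P₂)
    (hP3 : ∀ i : ℕ, 1 ≤ i → i ≤ n - 2 →
      sytProb Y (fun T => T.IsDescent i ∧ T.IsDescent (i + 1)) = P₃)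
    (hP22 : ∀ i j : ℕ, 1 ≤ i → i < j → j ≤ n - 1 → 1 < j - i →
      sytProb Y (fun T => T.IsDescent i ∧ T.IsDescent j) = P₂₂) :
    sytVar Y (SYT.dfun f) =
      (P₂ - P₂₂) * (∑ i ∈ Finset.Icc 1 (n - 1), f i ^ 2)
        + (P₃ - P₂₂) * (2 * ∑ i ∈ Finset.Icc 1 (n - 2), f i * f (i + 1))
        + (P₂₂ - P₂ ^ 2) * (∑ i ∈ Finset.Icc 1 (n - 1), f i) ^ 2 := by
  classical
  subst hY
  rw [funext (SYT.dfun_eq_sum_Icc f), sytVar_sum_ite,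
    sum_Icc_sum_Icc_mul_of_banded _ f _ (P₂ - P₂ * P₂) (P₃ - P₂ * P₂) (P₂₂ - P₂ * P₂)]
  · rw [Nat.sub_sub]
    ring
  · intro i hi
    rw [mem_Icc] at hi
    simp only [and_self, hP2 i hi.1 hi.2]
  · intro i hi j hj hnear
    rw [mem_Icc] at hi hj
    rw [hP2 i hi.1 hi.2, hP2 j hj.1 hj.2]
    rcases hnear with rfl | rfl
    · rw [hP3 i hi.1 (by omega)]
    · rw [sytProb_and_comm, hP3 j hj.1 (by omega)]
  · intro i hi j hj hfar
    rw [mem_Icc] at hi hj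
    rw [hP2 i hi.1 hi.2, hP2 j hj.1 hj.2]
    rcases hfar with hij | hji
    · rw [hP22 i j hi.1 (by omega) hj.2 (by omega)]
    · rw [sytProb_and_comm, hP22 j i hj.1 (by omega) hi.2 (by omega)]

/-- Let `λ` be a partition of `n ≥ 4` and `f : ℕ → ℝ`.  With
`P₂ = Pr[i ∈ D(T)]`, `P₃ = Pr[i, i+1 ∈ D(T)]` and `P₂₂ = Pr[i, j ∈ D(T)]` (`j − i > 1`),
all independent of the indices in the stated ranges, and
`Σ₁ = Σ_{i=1}^{n−1} f(i)`, `Σ₂ = Σ_{i=1}^{n−1} f(i)²`, `Σ₃ = 2Σ_{i=1}^{n−2} f(i)f(i+1)`,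
one has `Var_λ[d_f] = (P₂ − P₂₂)Σ₂ + (P₃ − P₂₂)Σ₃ + (P₂₂ − P₂²)Σ₁²`. -/
theorem variance_descent_function (n : ℕ) (hn : 4 ≤ n) (Y : YoungDiagram) (hY : Y.card = n)
    (f : ℕ → ℝ) (P₂ P₃ P₂₂ : ℝ)
    (hP2 : ∀ i : ℕ, 1 ≤ i → i ≤ n - 1 → sytProb Y (fun T => T.IsDescent i) = P₂)
    (hP3 : ∀ i : ℕ, 1 ≤ i → i ≤ n - 2 →
      sytProb Y (fun T => T.IsDescent i ∧ T.IsDescent (i + 1)) = P₃)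
    (hP22 : ∀ i j : ℕ, 1 ≤ i → i < j → j ≤ n - 1 → 1 < j - i →
      sytProb Y (fun T => T.IsDescent i ∧ T.IsDescent j) = P₂₂) :
    sytVar Y (SYT.dfun f) =
      (P₂ - P₂₂) * (∑ i ∈ Finset.Icc 1 (n - 1), f i ^ 2)
        + (P₃ - P₂₂) * (2 * ∑ i ∈ Finset.Icc 1 (n - 2), f i * f (i + 1))
        + (P₂₂ - P₂ ^ 2) * (∑ i ∈ Finset.Icc 1 (n - 1), f i) ^ 2 :=
  variance_descent_function_general n Y hY f P₂ P₃ P₂₂ hP2 hP3 hP22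
end

section
/- Let λ be a partition of a positive integer n. Then the sum of the squares of all hook lengths of λ is at most the sum of the first n squares: Σ_{(i,j)∈λ} h_{ij}² ≤ Σ_{k=1}^{n} k². -/
open scoped BigOperators

/-! Induct on the number of columns, deleting the first one. If it has `r` cells, the hook of
its cell in row `i` is at most `n - i`, because row `i` and the first column share only that
cell; so the first column contributes at most `n² + (n-1)² + ⋯ + (n-r+1)²`. Every other cell
keeps its hook length in the diagram of the remaining `n - r` cells, which carries the rest
`1² + ⋯ + (n-r)²` by induction. -/

namespace YoungDiagram

noncomputable def dropFirstCol (μ : YoungDiagram) : YoungDiagram where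
  cells := μ.cells.preimage (Prod.map id (· + 1))
    (Function.injective_id.prodMap (add_left_injective 1)).injOn
  isLowerSet a b hba ha := by
    simp only [Finset.coe_preimage, Set.mem_preimage, Finset.mem_coe, mem_cells] at ha ⊢
    exact μ.up_left_mem hba.1 (Nat.add_le_add_right hba.2 1) ha

variable {μ : YoungDiagram}

@[simp]
theorem mem_dropFirstCol {c : ℕ × ℕ} : c ∈ μ.dropFirstCol ↔ (c.1, c.2 + 1) ∈ μ := by
  rw [← mem_cells, ← mem_cells]
  simp only [dropFirstCol, Finset.mem_preimage]
  rfl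

@[simp]
theorem rowLen_dropFirstCol (i : ℕ) : μ.dropFirstCol.rowLen i = μ.rowLen i - 1 :=
  eq_of_forall_lt_iff fun j => by
    rw [← mem_iff_lt_rowLen, mem_dropFirstCol, mem_iff_lt_rowLen]
    dsimp only
    omega

@[simp]
theorem colLen_dropFirstCol (j : ℕ) : μ.dropFirstCol.colLen j = μ.colLen (j + 1) :=
  eq_of_forall_lt_iff fun i => by rw [← mem_iff_lt_colLen, mem_dropFirstCol, mem_iff_lt_colLen]

theorem sum_cells_eq_sum_col_zero_add_sum_dropFirstCol {M : Type*} [AddCommMonoid M]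
    (f : ℕ × ℕ → M) :
    ∑ c ∈ μ.cells, f c =
      ∑ c ∈ μ.col 0, f c + ∑ c ∈ μ.dropFirstCol.cells, f (c.1, c.2 + 1) := by
  have hshift : μ.cells.filter (fun c => c.2 ≠ 0) =
      μ.dropFirstCol.cells.image (Prod.map id (· + 1)) := by
    ext ⟨i, j⟩
    cases j <;> simp
  rw [← Finset.sum_filter_add_sum_filter_not μ.cells (fun c => c.2 = 0), hshift,
    Finset.sum_image (Function.injective_id.prodMap (add_left_injective 1)).injOn]
  rfl

theorem card_eq_colLen_zero_add_card_dropFirstCol :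
    μ.card = μ.colLen 0 + μ.dropFirstCol.card := by
  have h := sum_cells_eq_sum_col_zero_add_sum_dropFirstCol (μ := μ) fun _ => 1
  simp only [Finset.sum_const, smul_eq_mul, mul_one] at h
  rwa [colLen_eq_card]

theorem rowLen_add_colLen_le_card_add_one (i j : ℕ) :
    μ.rowLen i + μ.colLen j ≤ μ.card + 1 := by
  have hunion : (μ.row i ∪ μ.col j).card ≤ μ.card :=
    Finset.card_le_card <| Finset.union_subset (Finset.filter_subset _ _) (Finset.filter_subset _ _)
  have hinter : (μ.row i ∩ μ.col j).card ≤ 1 := by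
    refine Finset.card_le_one.2 fun a ha b hb => ?_
    simp only [Finset.mem_inter, mem_row_iff, mem_col_iff] at ha hb
    exact Prod.ext (ha.1.2.trans hb.1.2.symm) (ha.2.2.trans hb.2.2.symm)
  rw [rowLen_eq_card, colLen_eq_card, ← Finset.card_union_add_card_inter]
  omega

end YoungDiagram

open YoungDiagram

theorem hookLen_dropFirstCol {μ : YoungDiagram} {c : ℕ × ℕ} (hc : c ∈ μ.dropFirstCol) :
    hookLen μ.dropFirstCol c = hookLen μ (c.1, c.2 + 1) := by
  have := mem_iff_lt_rowLen.1 (mem_dropFirstCol.1 hc)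
  simp only [hookLen, rowLen_dropFirstCol, colLen_dropFirstCol]
  omega

theorem hookLen_le_card_sub (μ : YoungDiagram) (i j : ℕ) :
    hookLen μ (i, j) ≤ μ.card - i - j := by
  have := μ.rowLen_add_colLen_le_card_add_one i j
  simp only [hookLen]
  omega

theorem Finset.sum_Icc_one_eq_sum_range_sub_add {M : Type*} [AddCommMonoid M] (f : ℕ → M)
    {n r : ℕ} (hr : r ≤ n) :
    ∑ k ∈ Icc 1 n, f k = ∑ i ∈ range r, f (n - i) + ∑ k ∈ Icc 1 (n - r), f k := by
  induction r with
  | zero => simp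
  | succ r ih =>
    obtain ⟨m, hm⟩ : ∃ m, n - r = m + 1 := ⟨n - r - 1, by omega⟩
    rw [ih (by omega), hm, Finset.sum_Icc_succ_top (by omega), Finset.sum_range_succ,
      show n - (r + 1) = m by omega, ← hm]
    abel

theorem sum_hookLen_le_sum_Icc {M : Type*} [AddCommMonoid M] [PartialOrder M]
    [IsOrderedAddMonoid M] {f : ℕ → M} (hf : Monotone f) (μ : YoungDiagram) :
    ∑ c ∈ μ.cells, f (hookLen μ c) ≤ ∑ k ∈ Finset.Icc 1 μ.card, f k := by
  induction hk : μ.rowLen 0 generalizing μ with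
  | zero =>
    have : μ.cells = ∅ := Finset.eq_empty_of_forall_notMem fun c hc =>
      by simpa [hk] using mem_iff_lt_rowLen.1 (μ.up_left_mem (Nat.zero_le c.1) le_rfl hc)
    simp [this]
  | succ k ih =>
    have hcard := μ.card_eq_colLen_zero_add_card_dropFirstCol
    have hcol : ∑ c ∈ μ.col 0, f (hookLen μ c) ≤
        ∑ i ∈ Finset.range (μ.colLen 0), f (μ.card - i) := by
      rw [col_eq_prod, Finset.sum_product, Finset.sum_congr rfl fun i _ => Finset.sum_singleton _ _]
      exact Finset.sum_le_sum fun i _ => hf (by simpa using hookLen_le_card_sub μ i 0)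
    have hrest : ∑ c ∈ μ.dropFirstCol.cells, f (hookLen μ (c.1, c.2 + 1)) ≤
        ∑ k ∈ Finset.Icc 1 μ.dropFirstCol.card, f k := by
      rw [← Finset.sum_congr rfl fun c hc =>
        congrArg f (hookLen_dropFirstCol ((mem_cells c).1 hc))]
      exact ih _ (by simp [hk])
    rw [sum_cells_eq_sum_col_zero_add_sum_dropFirstCol,
      Finset.sum_Icc_one_eq_sum_range_sub_add f (hcard ▸ Nat.le_add_right _ _),
      show μ.card - μ.colLen 0 = μ.dropFirstCol.card by omega]
    exact add_le_add hcol hrest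

theorem sum_hookLen_sq_le_general (n : ℕ) (Y : YoungDiagram) (hY : Y.card = n) :
    ∑ c ∈ Y.cells, (hookLen Y c) ^ 2 ≤ ∑ k ∈ Finset.Icc 1 n, k ^ 2 :=
  hY ▸ sum_hookLen_le_sum_Icc (pow_left_mono 2) Y

/-- For a partition `λ` of a positive integer `n`, the sum of the
squares of all hook lengths is at most the sum of the first `n` squares:
`Σ_{(i,j)∈λ} h_{ij}² ≤ Σ_{k=1}^{n} k²`. -/
theorem sum_hookLen_sq_le (n : ℕ) (hn : 0 < n) (Y : YoungDiagram) (hY : Y.card = n) :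
    ∑ c ∈ Y.cells, (hookLen Y c) ^ 2 ≤ ∑ k ∈ Finset.Icc 1 n, k ^ 2 :=
  sum_hookLen_sq_le_general n Y hY
end

section
/- Let n and m be positive integers with n/2 ≤ m ≤ n, and let λ be a partition of n with λ_1 ≤ m. Then Σ_i C(λ_i,2) ≤ C(m,2) + C(n−m,2), where C(a,2) = a(a−1)/2. -/
open scoped BigOperators

lemma two_mul_choose_two' (x : ℕ) : 2 * x.choose 2 + x = x * x := by
  induction x with
  | zero => rfl
  | succ n ih =>
    rw [Nat.choose_succ_succ, Nat.choose_one_right]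
    nlinarith [ih]

lemma choose_two_superadd (x y : ℕ) : x.choose 2 + y.choose 2 ≤ (x + y).choose 2 := by
  have hx := two_mul_choose_two' x
  have hy := two_mul_choose_two' y
  have hxy := two_mul_choose_two' (x + y)
  nlinarith

lemma choose_two_middle (a t m u : ℕ) (ha : a ≤ m) (ht : t ≤ m) (hu : m + u = t + a) :
    a.choose 2 + t.choose 2 ≤ m.choose 2 + u.choose 2 := by
  have h1 := two_mul_choose_two' a
  have h2 := two_mul_choose_two' t
  have h3 := two_mul_choose_two' m
  have h4 := two_mul_choose_two' u
  have ha' : (a : ℤ) ≤ m := by exact_mod_cast ha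
  have ht' : (t : ℤ) ≤ m := by exact_mod_cast ht
  have hu' : (m : ℤ) + u = t + a := by exact_mod_cast hu
  zify at h1 h2 h3 h4 ⊢
  nlinarith [mul_nonneg (sub_nonneg.2 ha') (sub_nonneg.2 ht')]

lemma key_sum (m : ℕ) : ∀ (k : ℕ) (a : ℕ → ℕ), (∀ i, a i ≤ m) →
    (∑ i ∈ Finset.range k, a i) ≤ 2 * m →
    ∑ i ∈ Finset.range k, (a i).choose 2 ≤
      (min (∑ i ∈ Finset.range k, a i) m).choose 2 + ((∑ i ∈ Finset.range k, a i) - m).choose 2 := by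
  intro k
  induction k with
  | zero => intro a _ _; simp
  | succ k ih =>
    intro a ha hs
    simp only [Finset.sum_range_succ] at hs ⊢
    have IH := ih a ha (by omega)
    set t := ∑ i ∈ Finset.range k, a i with htdef
    rcases le_or_gt m t with hmt | htm
    · -- t ≥ m
      have h1 : min t m = m := min_eq_right hmt
      have h2 : min (t + a k) m = m := min_eq_right (le_trans hmt (Nat.le_add_right _ _))
      rw [h1] at IH
      rw [h2]
      have h3 : (a k).choose 2 + (t - m).choose 2 ≤ (t + a k - m).choose 2 := by
        have := choose_two_superadd (a k) (t - m)
        have he : a k + (t - m) = t + a k - m := by omega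
        rwa [he] at this
      omega
    · rcases le_or_gt m (t + a k) with hms | hsm
      · -- t < m ≤ t + a k
        have h1 : min t m = t := min_eq_left htm.le
        have h2 : min (t + a k) m = m := min_eq_right hms
        rw [h1, Nat.sub_eq_zero_of_le htm.le] at IH
        rw [h2]
        have h3 : (a k).choose 2 + t.choose 2 ≤ m.choose 2 + (t + a k - m).choose 2 := by
          apply choose_two_middle _ _ _ _ (ha k) htm.le
          omega
        simp at IH
        omega
      · -- t + a k < m
        have h1 : min t m = t := min_eq_left htm.le
        have h2 : min (t + a k) m = t + a k := min_eq_left hsm.le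
        rw [h1, Nat.sub_eq_zero_of_le htm.le] at IH
        rw [h2, Nat.sub_eq_zero_of_le hsm.le]
        have h3 := choose_two_superadd t (a k)
        simp at IH ⊢
        omega

lemma card_eq_sum_rowLen (Y : YoungDiagram) (n : ℕ) (hY : Y.card = n) :
    ∑ i ∈ Finset.range n, Y.rowLen i = n := by
  have hb : ∀ c ∈ Y.cells, c.1 < n := by
    intro c hc
    have h0 : (c.1, 0) ∈ Y := Y.up_left_mem le_rfl (Nat.zero_le _) hc
    have h1 : c.1 < Y.colLen 0 := YoungDiagram.mem_iff_lt_colLen.mp h0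
    have h2 : Y.colLen 0 ≤ Y.card := by
      rw [Y.colLen_eq_card]
      exact Finset.card_filter_le _ _
    omega
  have hcells : Y.cells = (Finset.range n).biUnion Y.row := by
    ext c
    simp only [Finset.mem_biUnion, Finset.mem_range, YoungDiagram.mem_row_iff]
    constructor
    · intro hc; exact ⟨c.1, hb c hc, hc, rfl⟩
    · rintro ⟨i, _, hc, _⟩; exact hc
  have hdisj : ∀ i ∈ Finset.range n, ∀ j ∈ Finset.range n, i ≠ j →
      Disjoint (Y.row i) (Y.row j) := by
    intro i _ j _ hij
    simp only [Finset.disjoint_left, YoungDiagram.mem_row_iff]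
    rintro c ⟨_, rfl⟩ ⟨_, h⟩
    exact hij h
  calc ∑ i ∈ Finset.range n, Y.rowLen i = ∑ i ∈ Finset.range n, (Y.row i).card := by
        simp [Y.rowLen_eq_card]
    _ = Y.cells.card := by rw [hcells, Finset.card_biUnion hdisj]
    _ = n := hY


/-- Let `n` and `m` be positive integers with `n/2 ≤ m ≤ n`, and let
`λ` be a partition of `n` with `λ₁ ≤ m`.  Then
`Σ_i C(λ_i,2) ≤ C(m,2) + C(n−m,2)`. -/
theorem sum_choose_two_le (n m : ℕ) (hn : 0 < n) (hm : 0 < m)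
    (hnm : n ≤ 2 * m) (hmn : m ≤ n)
    (Y : YoungDiagram) (hY : Y.card = n) (hrow : Y.rowLen 0 ≤ m) :
    ∑ i ∈ Finset.range n, (Y.rowLen i).choose 2 ≤ m.choose 2 + (n - m).choose 2 := by
  have hsum := card_eq_sum_rowLen Y n hY
  have ha : ∀ i, Y.rowLen i ≤ m := fun i => le_trans (Y.rowLen_anti 0 i (Nat.zero_le i)) hrow
  have := key_sum m n Y.rowLen ha (by omega)
  rw [hsum] at this
  have hmin : min n m = m := min_eq_right hmn
  rw [hmin] at this
  exact this
end
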